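/- Suppose p ∈ (0,1], θ ∈ J_γ \ J_{γ,T}, and ρ > 0. Let ĝ be a 2π-periodic analytic function on the strip S = {z ∈ ℂ : |Im z| < ρ/(2π)} such that ĝ(ξ₀) = 0 for every ξ₀ ∈ ℝ with p(ξ₀, θ) = 0. Then there exists an analytic function h on S such that h(z) p(z, θ) = ĝ(z) for all z ∈ S; that is, the meromorphic function ĝ(z)/p(z, θ) is analytic on S. -/

import Mathlib

noncomputable section

/-- The arc `J_γ`. -/
def Jgamma (p γ : ℝ) : Set ℝ :=
  Set.Icc (Real.arccos p + γ / 2) (Real.pi - Real.arccos p + γ / 2) ∪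
    Set.Icc (Real.pi + Real.arccos p + γ / 2) (2 * Real.pi - Real.arccos p + γ / 2)

/-- The threshold set `J_{γ,T}`. -/
def JgammaT (p γ : ℝ) : Set ℝ :=
  {Real.arccos p + γ / 2, Real.pi - Real.arccos p + γ / 2,
    Real.pi + Real.arccos p + γ / 2, 2 * Real.pi - Real.arccos p + γ / 2}

/-- `p(z,θ) = det(Û₀(ξ) - e^{iθ})`, as a function of a complex variable `z`. -/
def Pdet (p α γ : ℝ) (z : ℂ) (θ : ℝ) : ℂ :=
  Complex.exp (2 * θ * Complex.I) -
    2 * Complex.exp (θ * Complex.I) * (p : ℂ) * Complex.exp ((γ / 2 : ℝ) * Complex.I) *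
      Complex.cos (z + α - γ / 2) +
    Complex.exp (γ * Complex.I)

lemma Pdet_eq (p α γ θ : ℝ) (z : ℂ) :
    Pdet p α γ z θ = 2 * Complex.exp (((θ : ℂ) + γ / 2) * Complex.I) *
      ((Real.cos (θ - γ / 2) : ℂ) - (p : ℂ) * Complex.cos (z + α - γ / 2)) := by
  have hx2 : Complex.exp (2 * θ * Complex.I)
      = Complex.exp (θ * Complex.I) * Complex.exp (θ * Complex.I) := by
    rw [← Complex.exp_add]; ring_nf
  have hy2 : Complex.exp ((γ : ℂ) * Complex.I)
      = Complex.exp (((γ : ℂ) / 2) * Complex.I) * Complex.exp (((γ : ℂ) / 2) * Complex.I) := by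
    rw [← Complex.exp_add]; ring_nf
  have hxy : Complex.exp (((θ : ℂ) + γ / 2) * Complex.I)
      = Complex.exp (θ * Complex.I) * Complex.exp (((γ : ℂ) / 2) * Complex.I) := by
    rw [← Complex.exp_add]; ring_nf
  have hcos : (Real.cos (θ - γ / 2) : ℂ)
      = (Complex.exp (((θ : ℂ) - γ / 2) * Complex.I)
          + Complex.exp (-(((θ : ℂ) - γ / 2)) * Complex.I)) / 2 := by
    rw [Complex.ofReal_cos]
    push_cast
    rw [Complex.cos]
  have hd : Complex.exp (((θ : ℂ) - γ / 2) * Complex.I) * Complex.exp (((γ : ℂ) / 2) * Complex.I)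
      = Complex.exp (θ * Complex.I) := by
    rw [← Complex.exp_add]; ring_nf
  have hdn : Complex.exp (-(((θ : ℂ) - γ / 2)) * Complex.I) * Complex.exp ((θ : ℂ) * Complex.I)
      = Complex.exp (((γ : ℂ) / 2) * Complex.I) := by
    rw [← Complex.exp_add]; ring_nf
  rw [Pdet, hcos]
  push_cast
  rw [hx2, hy2, hxy]
  linear_combination (-(Complex.exp ((θ:ℂ) * Complex.I))) * hd - (Complex.exp (((γ:ℂ)/2) * Complex.I)) * hdn

lemma cos_bound (p γ θ : ℝ) (hp : 0 < p) (hp1 : p ≤ 1)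
    (hθ : θ ∈ Jgamma p γ \ JgammaT p γ) : |Real.cos (θ - γ / 2)| < p := by
  obtain ⟨hJ, hT⟩ := hθ
  simp only [JgammaT, Set.mem_insert_iff, Set.mem_singleton_iff, not_or] at hT
  obtain ⟨h1, h2, h3, h4⟩ := hT
  set a := Real.arccos p with ha
  have ha0 : 0 ≤ a := Real.arccos_nonneg p
  have ha2 : a < Real.pi / 2 := Real.arccos_lt_pi_div_two.2 hp
  have hpi : 0 < Real.pi := Real.pi_pos
  have hcosa : Real.cos a = p := Real.cos_arccos (by linarith) hp1
  set t := θ - γ / 2 with hts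
  have key : ∀ s : ℝ, a < s → s < Real.pi - a → |Real.cos s| < p := by
    intro s hs1 hs2
    have hupper : Real.cos s < p := by
      rw [← hcosa]
      exact Real.cos_lt_cos_of_nonneg_of_le_pi ha0 (by linarith) hs1
    have hlower : -p < Real.cos s := by
      have : Real.cos (Real.pi - a) < Real.cos s :=
        Real.cos_lt_cos_of_nonneg_of_le_pi (by linarith) (by linarith) hs2
      rwa [Real.cos_pi_sub, hcosa] at this
    rw [abs_lt]; exact ⟨hlower, hupper⟩
  rcases hJ with hJ | hJ
  · obtain ⟨hl, hr⟩ := hJ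
    exact key t (by rw [hts]; cases lt_or_eq_of_le hl with
      | inl h => linarith
      | inr h => exact absurd h.symm h1) (by cases lt_or_eq_of_le hr with
      | inl h => simp only [hts]; linarith
      | inr h => exact absurd h h2)
  · obtain ⟨hl, hr⟩ := hJ
    have hl' : Real.pi + a < t := by
      rcases lt_or_eq_of_le hl with h | h
      · simp only [hts]; linarith
      · exact absurd h.symm h3
    have hr' : t < 2 * Real.pi - a := by
      rcases lt_or_eq_of_le hr with h | h
      · simp only [hts]; linarith
      · exact absurd h h4
    have : |Real.cos (2 * Real.pi - t)| < p :=
      key _ (by linarith) (by linarith)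
    rwa [Real.cos_two_pi_sub] at this

lemma Pdet_hasDerivAt (p α γ θ : ℝ) (z : ℂ) :
    HasDerivAt (fun w => Pdet p α γ w θ)
      (2 * Complex.exp (θ * Complex.I) * (p : ℂ) * Complex.exp ((γ / 2 : ℝ) * Complex.I) *
        Complex.sin (z + α - γ / 2)) z := by
  have h1 : HasDerivAt (fun w : ℂ => w + (α : ℂ) - (γ : ℂ) / 2) 1 z := by
    simpa using ((hasDerivAt_id z).add_const ((α : ℂ))).sub_const ((γ : ℂ) / 2)
  have h2 : HasDerivAt (fun w : ℂ => Complex.cos (w + (α : ℂ) - (γ : ℂ) / 2))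
      (-Complex.sin (z + (α : ℂ) - (γ : ℂ) / 2)) z := by
    simpa [Function.comp_def] using (Complex.hasDerivAt_cos (z + (α : ℂ) - (γ : ℂ) / 2)).comp z h1
  have h3 := (h2.const_mul
    (2 * Complex.exp (θ * Complex.I) * (p : ℂ) * Complex.exp ((γ / 2 : ℝ) * Complex.I)))
  have h4 := ((hasDerivAt_const z (Complex.exp (2 * θ * Complex.I))).sub h3).add_const
    (Complex.exp (γ * Complex.I))
  exact h4.congr_deriv (by ring)

lemma Pdet_zero_real (p α γ θ : ℝ) (hp : 0 < p) (hc : |Real.cos (θ - γ / 2)| < p)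
    (z : ℂ) (hz : Pdet p α γ z θ = 0) :
    z.im = 0 ∧ Complex.sin (z + (α : ℂ) - (γ : ℂ) / 2) ≠ 0 := by
  set w := z + (α : ℂ) - (γ : ℂ) / 2 with hw
  have hwim : w.im = z.im := by simp [hw]
  have hK : (2 : ℂ) * Complex.exp (((θ : ℂ) + γ / 2) * Complex.I) ≠ 0 := by
    simp [Complex.exp_ne_zero]
  have heq : (Real.cos (θ - γ / 2) : ℂ) = (p : ℂ) * Complex.cos w := by
    have hthis := hz
    rw [Pdet_eq] at hthis
    have h0 := (mul_eq_zero.mp hthis).resolve_left hK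
    exact sub_eq_zero.mp h0
  have hcw := Complex.cos_eq w
  have heq2 : (Real.cos (θ - γ / 2) : ℂ)
      = ((p * (Real.cos w.re * Real.cosh w.im) : ℝ) : ℂ)
        - ((p * (Real.sin w.re * Real.sinh w.im) : ℝ) : ℂ) * Complex.I := by
    rw [heq, hcw]
    rw [← Complex.ofReal_cos, ← Complex.ofReal_cosh, ← Complex.ofReal_sin, ← Complex.ofReal_sinh]
    push_cast
    ring
  have hboth : p * (Real.sin w.re * Real.sinh w.im) = 0 ∧
      Real.cos (θ - γ / 2) = p * (Real.cos w.re * Real.cosh w.im) := by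
    have h := heq2
    rw [Complex.ext_iff] at h
    simp only [Complex.ofReal_re, Complex.ofReal_im, Complex.sub_re, Complex.sub_im,
      Complex.mul_re, Complex.mul_im, Complex.I_re, Complex.I_im, mul_zero, mul_one,
      zero_mul, sub_zero, zero_sub, zero_add] at h
    exact ⟨by linarith [h.2], by linarith [h.1]⟩
  have him := hboth.1
  have hre := hboth.2
  have hsins : Real.sin w.re * Real.sinh w.im = 0 := by
    rcases mul_eq_zero.mp him with h | h
    · exact absurd h (ne_of_gt hp)
    · exact h
  have hwim0 : w.im = 0 := by
    by_contra hne
    have hsinh : Real.sinh w.im ≠ 0 := Real.sinh_ne_zero.mpr hne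
    have hsin0 : Real.sin w.re = 0 := by
      rcases mul_eq_zero.mp hsins with h | h
      · exact h
      · exact absurd h hsinh
    have hcos1 : |Real.cos w.re| = 1 := by
      have hs := Real.sin_sq_add_cos_sq w.re
      rw [hsin0] at hs
      nlinarith [abs_nonneg (Real.cos w.re), sq_abs (Real.cos w.re)]
    have hcosh1 : 1 ≤ Real.cosh w.im := Real.one_le_cosh w.im
    have habs : |Real.cos (θ - γ / 2)| = p * (|Real.cos w.re| * |Real.cosh w.im|) := by
      rw [hre, abs_mul, abs_mul, abs_of_pos hp]
    have hge : p ≤ |Real.cos (θ - γ / 2)| := by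
      rw [habs, hcos1, one_mul, abs_of_pos (lt_of_lt_of_le one_pos hcosh1)]
      nlinarith
    linarith
  have hcosh0 : Real.cosh w.im = 1 := by rw [hwim0, Real.cosh_zero]
  have hrecos : Real.cos (θ - γ / 2) = p * Real.cos w.re := by rw [hre, hcosh0]; ring
  have hcoslt : |Real.cos w.re| < 1 := by
    have hlt : p * |Real.cos w.re| < p := by
      calc p * |Real.cos w.re| = |Real.cos (θ - γ / 2)| := by
            rw [hrecos, abs_mul, abs_of_pos hp]
        _ < p := hc
    exact (mul_lt_iff_lt_one_right hp).mp hlt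
  have hsinne : Real.sin w.re ≠ 0 := by
    intro h0
    have hs := Real.sin_sq_add_cos_sq w.re
    rw [h0] at hs
    nlinarith [sq_abs (Real.cos w.re), abs_nonneg (Real.cos w.re)]
  have hwreal : w = ((w.re : ℝ) : ℂ) := Complex.ext rfl (by simp [hwim0])
  refine ⟨by rw [← hwim]; exact hwim0, ?_⟩
  rw [hwreal, ← Complex.ofReal_sin]
  exact Complex.ofReal_ne_zero.2 hsinne

lemma analyticAt_dslope {f : ℂ → ℂ} {z₀ : ℂ} (hf : AnalyticAt ℂ f z₀) :
    AnalyticAt ℂ (dslope f z₀) z₀ := by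
  apply Complex.analyticAt_of_differentiable_on_punctured_nhds_of_continuousAt
  · have hev : ∀ᶠ z in nhdsWithin z₀ {z₀}ᶜ, AnalyticAt ℂ f z :=
      hf.eventually_analyticAt.filter_mono nhdsWithin_le_nhds
    filter_upwards [hev, self_mem_nhdsWithin] with z hz hzne
    have hzne' : z ≠ z₀ := hzne
    have hopen : ∀ᶠ w in nhds z, w ≠ z₀ := isOpen_ne.eventually_mem hzne'
    have hEq : (fun w => (w - z₀)⁻¹ * (f w - f z₀)) =ᶠ[nhds z] dslope f z₀ := by
      filter_upwards [hopen] with w hw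
      rw [dslope_of_ne _ hw, slope_def_module, smul_eq_mul]
    have hdiff : DifferentiableAt ℂ (fun w => (w - z₀)⁻¹ * (f w - f z₀)) z :=
      ((differentiableAt_id.sub_const z₀).inv (sub_ne_zero.2 hzne')).mul
        (hz.differentiableAt.sub_const (f z₀))
    exact hdiff.congr_of_eventuallyEq hEq.symm
  · exact continuousAt_dslope_same.2 hf.differentiableAt

/-- if the 2π-periodic analytic function `ghat` on the strip
`S = {|Im z| < ρ/(2π)}` vanishes at all real zeros of `p(·,θ)` with
`θ ∈ J_γ \ J_{γ,T}`, then `ghat(z)/p(z,θ)` is analytic on `S`. -/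
theorem quotient_analytic
    (p α γ : ℝ) (hp : p ∈ Set.Ioc (0 : ℝ) 1)
    (hα : α ∈ Set.Ico 0 (2 * Real.pi)) (hγ : γ ∈ Set.Ico 0 (2 * Real.pi))
    (θ : ℝ) (hθ : θ ∈ Jgamma p γ \ JgammaT p γ)
    (ρ : ℝ) (hρ : 0 < ρ)
    (ghat : ℂ → ℂ)
    (hghat : AnalyticOnNhd ℂ ghat {z : ℂ | |z.im| < ρ / (2 * Real.pi)})
    (hghatper : ∀ z : ℂ, |z.im| < ρ / (2 * Real.pi) → ghat (z + 2 * Real.pi) = ghat z)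
    (hvanish : ∀ ξ₀ : ℝ, Pdet p α γ ξ₀ θ = 0 → ghat ξ₀ = 0) :
    ∃ h : ℂ → ℂ, AnalyticOnNhd ℂ h {z : ℂ | |z.im| < ρ / (2 * Real.pi)} ∧
      ∀ z : ℂ, |z.im| < ρ / (2 * Real.pi) → h z * Pdet p α γ z θ = ghat z := by
  obtain ⟨hp0, hp1⟩ := hp
  have hc := cos_bound p γ θ hp0 hp1 hθ
  set P : ℂ → ℂ := fun z => Pdet p α γ z θ with hPdef
  have hPd : ∀ z, HasDerivAt P (2 * Complex.exp (θ * Complex.I) * (p : ℂ) *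
      Complex.exp ((γ / 2 : ℝ) * Complex.I) * Complex.sin (z + α - γ / 2)) z :=
    fun z => Pdet_hasDerivAt p α γ θ z
  have hPdiff : Differentiable ℂ P := fun z => (hPd z).differentiableAt
  have hPa : ∀ z, AnalyticAt ℂ P z := fun z => hPdiff.analyticAt z
  have hBne : (2 : ℂ) * Complex.exp (θ * Complex.I) * (p : ℂ) *
      Complex.exp ((γ / 2 : ℝ) * Complex.I) ≠ 0 := by
    refine mul_ne_zero (mul_ne_zero (mul_ne_zero two_ne_zero (Complex.exp_ne_zero _)) ?_)
      (Complex.exp_ne_zero _)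
    exact Complex.ofReal_ne_zero.2 (ne_of_gt hp0)
  have hzero : ∀ z : ℂ, P z = 0 → z.im = 0 ∧ deriv P z ≠ 0 := by
    intro z hz
    obtain ⟨him, hsin⟩ := Pdet_zero_real p α γ θ hp0 hc z hz
    refine ⟨him, ?_⟩
    rw [(hPd z).deriv]
    exact mul_ne_zero hBne hsin
  have hgzero : ∀ z : ℂ, P z = 0 → ghat z = 0 := by
    intro z hz
    have him := (hzero z hz).1
    have hzeq : z = ((z.re : ℝ) : ℂ) := Complex.ext rfl (by simp [him])
    have hv := hvanish z.re (by rw [← hzeq]; exact hz)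
    rwa [← hzeq] at hv
  classical
  refine ⟨fun z => if P z = 0 then deriv ghat z / deriv P z else ghat z / P z, ?_, ?_⟩
  · intro z₀ hz₀
    by_cases hP0 : P z₀ = 0
    · have hg0 : ghat z₀ = 0 := hgzero z₀ hP0
      have hga : AnalyticAt ℂ ghat z₀ := hghat z₀ hz₀
      have hQa := analyticAt_dslope (hPa z₀)
      have hGa := analyticAt_dslope hga
      have hQ0 : dslope P z₀ z₀ ≠ 0 := by rw [dslope_same]; exact (hzero z₀ hP0).2
      have hPne : ∀ᶠ z in nhdsWithin z₀ {z₀}ᶜ, P z ≠ 0 := by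
        rcases (hPa z₀).eventually_eq_zero_or_eventually_ne_zero with h | h
        · exfalso
          apply (hzero z₀ hP0).2
          have hd0 : deriv P z₀ = deriv (fun _ => (0 : ℂ)) z₀ :=
            Filter.EventuallyEq.deriv_eq h
          simpa using hd0
        · exact h
      have hPne' : ∀ᶠ z in nhds z₀, z ≠ z₀ → P z ≠ 0 := eventually_nhdsWithin_iff.mp hPne
      have hEq : (fun z => dslope ghat z₀ z / dslope P z₀ z) =ᶠ[nhds z₀]
          (fun z => if P z = 0 then deriv ghat z / deriv P z else ghat z / P z) := by
        filter_upwards [hPne'] with z hzP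
        by_cases hzz : z = z₀
        · subst hzz
          simp only [if_pos hP0, dslope_same]
        · have hPz : P z ≠ 0 := hzP hzz
          rw [if_neg hPz]
          have hgfac : ghat z = (z - z₀) * dslope ghat z₀ z := by
            have hs := sub_smul_dslope ghat z₀ z
            rw [smul_eq_mul] at hs
            rw [hs, hg0, sub_zero]
          have hpfac : P z = (z - z₀) * dslope P z₀ z := by
            have hs := sub_smul_dslope P z₀ z
            rw [smul_eq_mul] at hs
            rw [hs, hP0, sub_zero]
          rw [hgfac, hpfac, mul_div_mul_left _ _ (sub_ne_zero.2 hzz)]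
      exact (hGa.div hQa hQ0).congr hEq
    · have hEq : (fun z => ghat z / P z) =ᶠ[nhds z₀]
          (fun z => if P z = 0 then deriv ghat z / deriv P z else ghat z / P z) := by
        filter_upwards [(hPa z₀).continuousAt.eventually_ne hP0] with z hz
        rw [if_neg hz]
      exact ((hghat z₀ hz₀).div (hPa z₀) hP0).congr hEq
  · intro z hz
    show (if P z = 0 then deriv ghat z / deriv P z else ghat z / P z) * P z = ghat z
    by_cases hP0 : P z = 0
    · rw [if_pos hP0, hP0, mul_zero, hgzero z hP0]
    · rw [if_neg hP0]
      exact div_mul_cancel₀ _ hP0
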